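/- arXiv:1007.4018 — 4 statements merged into one kernel-verified Lean document; each statement's English description precedes it below -/
import Mathlib

section
/- For every discount factor λ with 1/2 < λ < 1 and every finite word w over {a,b} that is ambiguous (i.e., 1 - λ^|w|/(1-λ) ≤ v_a(w) < 1, where v_a(w) = Σ_{i : w_i = a} λ^(i-1) is the discounted count of a's in w), at least one of the extensions w·a or w·b is ambiguous. -/
/-- Discounted count of `a`'s (encoded as `true`) in a finite word,
    position `i` (0-indexed) contributing `lam ^ i`. -/
def va (lam : ℝ) (w : List Bool) : ℝ :=
  ∑ i ∈ Finset.range w.length, if w.getD i false then lam ^ i else 0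

/-- A finite word is ambiguous if `1 - lam^|w|/(1-lam) ≤ v_a(w) < 1`. -/
def Ambiguous (lam : ℝ) (w : List Bool) : Prop :=
  1 - lam ^ w.length / (1 - lam) ≤ va lam w ∧ va lam w < 1

/-! If `w` is ambiguous, `v_a(w)` lies in `[1 - t, 1)` with `t = λ^|w|/(1-λ)`. Appending `a`
shifts `v_a` by `λ^|w|` and the window to `[1 - t + λ^|w|, 1)`, so `w·a` stays ambiguous unless
`v_a(w) + λ^|w| ≥ 1`. Appending `b` keeps `v_a` and only lowers the left end to `1 - λ t`, so
`w·b` is ambiguous as soon as `v_a(w) ≥ 1 - λ t`; in the remaining case `v_a(w) ≥ 1 - λ^|w|`,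
and `λ^|w| ≤ λ t` is exactly `1 - λ ≤ λ`, i.e. `λ ≥ 1/2`. -/

lemma va_append_singleton (lam : ℝ) (w : List Bool) (c : Bool) :
    va lam (w ++ [c]) = va lam w + if c then lam ^ w.length else 0 := by
  unfold va
  rw [List.length_append, List.length_singleton, Finset.sum_range_succ]
  congr 1
  · refine Finset.sum_congr rfl fun i hi => ?_
    rw [List.getD_eq_getElem?_getD, List.getD_eq_getElem?_getD,
      List.getElem?_append_left (Finset.mem_range.mp hi)]
  · rw [List.getD_eq_getElem?_getD, List.getElem?_append_right le_rfl]
    simp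

lemma pow_succ_div_one_sub {lam : ℝ} (hlam : lam ≠ 1) (n : ℕ) :
    lam ^ (n + 1) / (1 - lam) = lam ^ n / (1 - lam) - lam ^ n := by
  have : 1 - lam ≠ 0 := sub_ne_zero.mpr (Ne.symm hlam)
  field_simp
  ring

lemma pow_le_pow_succ_div_one_sub {lam : ℝ} (hl : 1 / 2 ≤ lam) (hl1 : lam < 1) (n : ℕ) :
    lam ^ n ≤ lam ^ (n + 1) / (1 - lam) := by
  rw [le_div_iff₀ (sub_pos.mpr hl1), pow_succ]
  have : 0 ≤ lam ^ n := pow_nonneg (by linarith) n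
  nlinarith

namespace Ambiguous

variable {lam : ℝ} {w : List Bool}

lemma append_true (hlam : lam ≠ 1) (hw : Ambiguous lam w)
    (h : va lam w + lam ^ w.length < 1) : Ambiguous lam (w ++ [true]) := by
  have hlow := hw.1
  rw [Ambiguous, va_append_singleton, List.length_append, List.length_singleton,
    if_pos rfl, pow_succ_div_one_sub hlam]
  exact ⟨by linarith, h⟩

lemma append_false (hl : 1 / 2 ≤ lam) (hl1 : lam < 1) (hw : Ambiguous lam w)
    (h : 1 ≤ va lam w + lam ^ w.length) : Ambiguous lam (w ++ [false]) := by
  have hpow := pow_le_pow_succ_div_one_sub hl hl1 w.length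
  rw [Ambiguous, va_append_singleton, List.length_append, List.length_singleton,
    if_neg Bool.false_ne_true, add_zero]
  exact ⟨by linarith, hw.2⟩

end Ambiguous

theorem ambiguous_extension (lam : ℝ) (hl : 1/2 < lam) (hl1 : lam < 1)
    (w : List Bool) (hw : Ambiguous lam w) :
    Ambiguous lam (w ++ [true]) ∨ Ambiguous lam (w ++ [false]) := by
  by_cases h : va lam w + lam ^ w.length < 1
  · exact Or.inl (hw.append_true hl1.ne h)
  · exact Or.inr (hw.append_false hl.le hl1 (not_lt.mp h))
end

section
/- For every discount factor λ with 1/2 < λ < 1, there exists an infinite word w over {a,b} such that every finite prefix of w is ambiguous, and consequently the discounted sum of a's in w equals exactly 1, i.e., Σ_{i : w_i = a} λ^(i-1) = 1. -/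
/-!
Take the greedy expansion of `1` in base `lam`: write an `a` at position `n` exactly when
doing so keeps the running sum `s n` strictly below `1`. The upper bound `s n < 1` is then
automatic. The lower bound `1 - lam ^ n / (1 - lam) ≤ s n` survives an `a`, since the bound
rises by exactly `lam ^ n`; it survives a `b`, because then `s n ≥ 1 - lam ^ n`, and
`lam ^ n ≤ lam ^ (n + 1) / (1 - lam)` is equivalent to `lam ≥ 1/2`. As `lam ^ n → 0`, the
two bounds squeeze the partial sums to `1`.
-/

open Finset Filter Topology

lemma va_ofFn (lam : ℝ) (w : ℕ → Bool) (n : ℕ) :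
    va lam (List.ofFn fun i : Fin n => w i) = ∑ i ∈ range n, if w i then lam ^ i else 0 := by
  simp only [va, List.length_ofFn]
  refine sum_congr rfl fun i hi => ?_
  rw [List.getD_eq_getElem _ _ (by simpa using hi), List.getElem_ofFn]

lemma hasSum_one_of_forall_ambiguous {lam : ℝ} (h0 : 0 ≤ lam) (h1 : lam < 1) {w : ℕ → Bool}
    (hw : ∀ n, Ambiguous lam (List.ofFn fun i : Fin n => w i)) :
    HasSum (fun i => if w i then lam ^ i else 0) 1 := by
  rw [hasSum_iff_tendsto_nat_of_nonneg (fun i => by split <;> positivity)]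
  have hlower : Tendsto (fun n => 1 - lam ^ n / (1 - lam)) atTop (𝓝 1) := by
    simpa using tendsto_const_nhds.sub
      ((tendsto_pow_atTop_nhds_zero_of_lt_one h0 h1).div_const (1 - lam))
  refine tendsto_of_tendsto_of_tendsto_of_le_of_le hlower tendsto_const_nhds
    (fun n => ?_) (fun n => ?_)
  · simpa [Ambiguous, va_ofFn] using (hw n).1
  · simpa [Ambiguous, va_ofFn] using (hw n).2.le

section Bounds

variable {lam : ℝ} (n : ℕ)

lemma one_sub_pow_succ_div (h1 : lam < 1) :
    1 - lam ^ (n + 1) / (1 - lam) = 1 - lam ^ n / (1 - lam) + lam ^ n := by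
  have : 1 - lam ≠ 0 := by linarith
  field_simp
  ring

lemma one_sub_pow_succ_div_le (h : 1 / 2 ≤ lam) (h1 : lam < 1) :
    1 - lam ^ (n + 1) / (1 - lam) ≤ 1 - lam ^ n := by
  rw [sub_le_sub_iff_left, le_div_iff₀ (by linarith), pow_succ]
  exact mul_le_mul_of_nonneg_left (by linarith) (pow_nonneg (by linarith) n)

end Bounds

noncomputable def greedySum (lam : ℝ) : ℕ → ℝ
  | 0 => 0
  | n + 1 => greedySum lam n + if greedySum lam n + lam ^ n < 1 then lam ^ n else 0

noncomputable def greedyDigit (lam : ℝ) (n : ℕ) : Bool :=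
  decide (greedySum lam n + lam ^ n < 1)

lemma greedySum_eq_sum (lam : ℝ) (n : ℕ) :
    greedySum lam n = ∑ i ∈ range n, if greedyDigit lam i then lam ^ i else 0 := by
  induction n with
  | zero => rfl
  | succ n ih => rw [sum_range_succ, ← ih, greedySum]; simp only [greedyDigit, decide_eq_true_eq]

lemma greedySum_bounds {lam : ℝ} (h : 1 / 2 ≤ lam) (h1 : lam < 1) (n : ℕ) :
    1 - lam ^ n / (1 - lam) ≤ greedySum lam n ∧ greedySum lam n < 1 := by
  induction n with
  | zero =>
    have : 1 ≤ 1 / (1 - lam) := by rw [le_div_iff₀ (by linarith)]; linarith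
    simp only [pow_zero, greedySum]
    constructor <;> linarith
  | succ n ih =>
    rw [greedySum]
    split_ifs with hdigit
    · rw [one_sub_pow_succ_div n h1]
      constructor <;> linarith
    · have := one_sub_pow_succ_div_le n h h1
      constructor <;> linarith

theorem exists_word_all_prefixes_ambiguous (lam : ℝ) (hl : 1/2 < lam) (hl1 : lam < 1) :
    ∃ w : ℕ → Bool,
      (∀ n : ℕ, Ambiguous lam (List.ofFn fun i : Fin n => w i)) ∧
      (∑' i : ℕ, if w i then lam ^ i else 0) = 1 := by
  have hambiguous : ∀ n, Ambiguous lam (List.ofFn fun i : Fin n => greedyDigit lam i) := by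
    intro n
    rw [Ambiguous, List.length_ofFn, va_ofFn, ← greedySum_eq_sum]
    exact greedySum_bounds hl.le hl1 n
  refine ⟨greedyDigit lam, hambiguous, ?_⟩
  exact (hasSum_one_of_forall_ambiguous (by linarith) hl1 hambiguous).tsum_eq
end

section
/- For every λ with 1/2 < λ < 1, the maximum of min(v_a(w), v_b(w)) over infinite words w ∈ {a,b}^ω equals 1/(2(1-λ)), and it is attained exactly at words w with v_a(w) = v_b(w). -/
/-- Discounted count of `a`'s (`true`) in an infinite word. -/
noncomputable def vA (lam : ℝ) (w : ℕ → Bool) : ℝ :=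
  ∑' i : ℕ, if w i then lam ^ i else 0

/-- Discounted count of `b`'s (`false`) in an infinite word. -/
noncomputable def vB (lam : ℝ) (w : ℕ → Bool) : ℝ :=
  ∑' i : ℕ, if w i then 0 else lam ^ i

/-!
Since `vA + vB = 1 / (1 - λ)`, the minimum is at most half of that, with equality iff
`vA = vB`. A balanced word exists when `λ ≥ 1/2`: write `a` whenever the running imbalance
`vA - vB` of the prefix is `≤ 0`, `b` otherwise. Because `λ ^ n ≤ 2 λ ^ (n + 1)`, each step
overshoots zero by at most its own size, so the imbalance after `n + 1` letters is at most
`λ ^ n` and tends to `0`.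
-/

open Filter Topology Finset

section MinOfSum

variable {α : Type*} [Field α] [LinearOrder α] [IsStrictOrderedRing α] {a b s : α}

theorem min_le_div_two_of_add_eq (h : a + b = s) : min a b ≤ s / 2 := by
  rcases le_total a b with hab | hab
  · rw [min_eq_left hab]; linarith
  · rw [min_eq_right hab]; linarith

theorem min_eq_div_two_iff_of_add_eq (h : a + b = s) : min a b = s / 2 ↔ a = b := by
  constructor
  · intro hmin
    rcases le_total a b with hab | hab
    · rw [min_eq_left hab] at hmin; linarith
    · rw [min_eq_right hab] at hmin; linarith
  · rintro rfl
    rw [min_self]; linarith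

end MinOfSum

section Discounted

variable {lam : ℝ}

theorem hasSum_vA (h0 : 0 ≤ lam) (h1 : lam < 1) (w : ℕ → Bool) :
    HasSum (fun i => if w i then lam ^ i else 0) (vA lam w) := by
  refine (((summable_geometric_of_lt_one h0 h1).indicator {i | w i}).congr fun i => ?_).hasSum
  cases h : w i <;> simp [h]

theorem hasSum_vB (h0 : 0 ≤ lam) (h1 : lam < 1) (w : ℕ → Bool) :
    HasSum (fun i => if w i then 0 else lam ^ i) (vB lam w) := by
  refine (((summable_geometric_of_lt_one h0 h1).indicator {i | w i = false}).congr
    fun i => ?_).hasSum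
  cases h : w i <;> simp [h]

theorem vA_add_vB (h0 : 0 ≤ lam) (h1 : lam < 1) (w : ℕ → Bool) :
    vA lam w + vB lam w = (1 - lam)⁻¹ := by
  refine ((hasSum_vA h0 h1 w).add (hasSum_vB h0 h1 w)).unique ?_
  convert hasSum_geometric_of_lt_one h0 h1 using 2 with i
  cases w i <;> simp

end Discounted

section Greedy

variable {lam : ℝ}

/-- `vA - vB` of the first `n` letters of `greedyWord lam`. -/
noncomputable def greedyImbalance (lam : ℝ) : ℕ → ℝ
  | 0 => 0
  | n + 1 => greedyImbalance lam n + if greedyImbalance lam n ≤ 0 then lam ^ n else -lam ^ n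

noncomputable def greedyWord (lam : ℝ) (n : ℕ) : Bool :=
  decide (greedyImbalance lam n ≤ 0)

theorem abs_greedyImbalance_succ_le (h : 1 / 2 ≤ lam) (n : ℕ) :
    |greedyImbalance lam (n + 1)| ≤ lam ^ n := by
  induction n with
  | zero => simp [greedyImbalance]
  | succ n ih =>
    have hpos : 0 ≤ lam ^ n := pow_nonneg (by linarith) n
    have hstep : lam ^ n ≤ 2 * lam ^ (n + 1) := by
      rw [pow_succ]; nlinarith
    rw [abs_le] at ih ⊢
    rw [greedyImbalance]
    split_ifs <;> constructor <;> linarith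

theorem tendsto_greedyImbalance (h : 1 / 2 ≤ lam) (h1 : lam < 1) :
    Tendsto (greedyImbalance lam) atTop (𝓝 0) := by
  rw [← tendsto_add_atTop_iff_nat 1]
  exact squeeze_zero_norm (abs_greedyImbalance_succ_le h)
    (tendsto_pow_atTop_nhds_zero_of_lt_one (by linarith) h1)

theorem sum_range_greedyWord (n : ℕ) :
    ∑ i ∈ range n, ((if greedyWord lam i then lam ^ i else 0) -
      (if greedyWord lam i then 0 else lam ^ i)) = greedyImbalance lam n := by
  induction n with
  | zero => simp [greedyImbalance]
  | succ n ih =>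
    rw [sum_range_succ, ih, greedyImbalance, greedyWord]
    split_ifs <;> simp_all

theorem vA_greedyWord_eq_vB (h : 1 / 2 ≤ lam) (h1 : lam < 1) :
    vA lam (greedyWord lam) = vB lam (greedyWord lam) := by
  have h0 : 0 ≤ lam := by linarith
  have hdiff :=
    ((hasSum_vA h0 h1 (greedyWord lam)).sub (hasSum_vB h0 h1 (greedyWord lam))).tendsto_sum_nat
  simp only [sum_range_greedyWord] at hdiff
  exact sub_eq_zero.1 (tendsto_nhds_unique hdiff (tendsto_greedyImbalance h h1))

end Greedy

theorem max_of_min_discounted (lam : ℝ) (hlam : 1/2 < lam) (hlam1 : lam < 1) :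
    IsGreatest {x : ℝ | ∃ w : ℕ → Bool, x = min (vA lam w) (vB lam w)}
      (1 / (2 * (1 - lam))) ∧
    ∀ w : ℕ → Bool,
      (min (vA lam w) (vB lam w) = 1 / (2 * (1 - lam)) ↔ vA lam w = vB lam w) := by
  have hsum := vA_add_vB (by linarith) hlam1
  have hhalf : 1 / (2 * (1 - lam)) = (1 - lam)⁻¹ / 2 := by field_simp
  rw [hhalf]
  refine ⟨⟨⟨greedyWord lam, ?_⟩, ?_⟩, fun w => min_eq_div_two_iff_of_add_eq (hsum w)⟩
  · rw [(min_eq_div_two_iff_of_add_eq (hsum _)).2 (vA_greedyWord_eq_vB hlam.le hlam1)]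
  · rintro _ ⟨w, rfl⟩
    exact min_le_div_two_of_add_eq (hsum w)
end

section
/- For every eventually periodic infinite word w = u·(z)^ω over {a,b} with z nonempty, and every transcendental λ ∈ (1/2, 1), the discounted counts satisfy v_a(w) ≠ v_b(w). -/
/-- The eventually periodic infinite word `u · z^ω`. -/
def lassoWord (u z : List Bool) (i : ℕ) : Bool :=
  if i < u.length then u.getD i false else z.getD ((i - u.length) % z.length) false

/-!
With `c i = ±1` according to the `i`-th letter, `v_a(w) - v_b(w) = ∑ c i λ ^ i`, and `c` is
periodic of period `m = |z|` from index `n = |u|` on. Hence `(1 - λ ^ m) (v_a(w) - v_b(w))`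
is the value at `λ` of a rational polynomial whose constant coefficient is `c 0 = ±1`;
if `v_a(w) = v_b(w)`, then `λ` is a root of this nonzero polynomial.
-/

open Finset Polynomial

section Periodic

variable {L : Type*} [Field L] [TopologicalSpace L] [IsTopologicalRing L] [T2Space L]

theorem tsum_mul_pow_eq_sum_range_add {a : ℕ → L} {x : L}
    (hs : Summable fun i => a i * x ^ i) (k : ℕ) :
    ∑' i, a i * x ^ i = ∑ i ∈ range k, a i * x ^ i + x ^ k * ∑' i, a (i + k) * x ^ i := by
  rw [← hs.sum_add_tsum_nat_add k, ← tsum_mul_left]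
  congr 1
  exact tsum_congr fun i => by ring

theorem one_sub_pow_mul_tsum_of_periodic {a : ℕ → L} {x : L} {n m : ℕ}
    (hper : ∀ i, n ≤ i → a (i + m) = a i) (hs : Summable fun i => a i * x ^ i) :
    (1 - x ^ m) * ∑' i, a i * x ^ i =
      ∑ i ∈ range (n + m), a i * x ^ i - x ^ m * ∑ i ∈ range n, a i * x ^ i := by
  have htail : ∑' i, a (i + (n + m)) * x ^ i = ∑' i, a (i + n) * x ^ i :=
    tsum_congr fun i => by rw [← add_assoc, hper _ (Nat.le_add_left n i)]
  have hlong := tsum_mul_pow_eq_sum_range_add hs (n + m)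
  have hshort := tsum_mul_pow_eq_sum_range_add hs n
  rw [htail] at hlong
  linear_combination hlong - x ^ m * hshort

end Periodic

section Algebraic

variable {K L : Type*} [Field K] [Field L] [Algebra K L]

/-- When `c` is periodic with period `m` from index `n` on, the power series
`(1 - X ^ m) · ∑ c i X ^ i` is this polynomial. -/
noncomputable def periodicNumerator (c : ℕ → K) (n m : ℕ) : K[X] :=
  PowerSeries.trunc (n + m) (PowerSeries.mk c) - X ^ m * PowerSeries.trunc n (PowerSeries.mk c)

theorem coeff_periodicNumerator_zero (c : ℕ → K) (n : ℕ) {m : ℕ} (hm : 0 < m) :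
    (periodicNumerator c n m).coeff 0 = c 0 := by
  simp [periodicNumerator, PowerSeries.coeff_trunc, hm, hm.ne]

theorem aeval_periodicNumerator (c : ℕ → K) (n m : ℕ) (x : L) :
    aeval x (periodicNumerator c n m) = ∑ i ∈ range (n + m), algebraMap K L (c i) * x ^ i
      - x ^ m * ∑ i ∈ range n, algebraMap K L (c i) * x ^ i := by
  simp [periodicNumerator, aeval_def, PowerSeries.eval₂_trunc_eq_sum_range]

variable [TopologicalSpace L] [IsTopologicalRing L] [T2Space L]

theorem isAlgebraic_of_hasSum_zero_of_periodic {c : ℕ → K} {n m : ℕ} (hm : 0 < m)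
    (hper : ∀ i, n ≤ i → c (i + m) = c i) (hc0 : c 0 ≠ 0) {x : L}
    (hs : HasSum (fun i => algebraMap K L (c i) * x ^ i) 0) : IsAlgebraic K x := by
  refine ⟨periodicNumerator c n m, fun h => hc0 ?_, ?_⟩
  · rw [← coeff_periodicNumerator_zero c n hm, h, coeff_zero]
  · rw [aeval_periodicNumerator,
      ← one_sub_pow_mul_tsum_of_periodic (fun i hi => by rw [hper i hi]) hs.summable,
      hs.tsum_eq, mul_zero]

end Algebraic

theorem lassoWord_add_length {u z : List Bool} {i : ℕ} (hi : u.length ≤ i) :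
    lassoWord u z (i + z.length) = lassoWord u z i := by
  have hsub : i + z.length - u.length = (i - u.length) + z.length := by omega
  simp [lassoWord, hsub, Nat.not_lt.mpr hi, Nat.not_lt.mpr (hi.trans (Nat.le_add_right i _))]

theorem hasSum_vA_sub_vB {lam : ℝ} (h0 : 0 ≤ lam) (h1 : lam < 1) (w : ℕ → Bool) :
    HasSum (fun i => (if w i then 1 else -1) * lam ^ i) (vA lam w - vB lam w) := by
  have hgeo := summable_geometric_of_lt_one h0 h1
  have hA : Summable fun i => if w i then lam ^ i else 0 :=
    hgeo.of_nonneg_of_le (fun i => by split <;> positivity)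
      (fun i => by split <;> simp [pow_nonneg h0])
  have hB : Summable fun i => if w i then 0 else lam ^ i :=
    hgeo.of_nonneg_of_le (fun i => by split <;> positivity)
      (fun i => by split <;> simp [pow_nonneg h0])
  exact (hA.hasSum.sub hB.hasSum).congr_fun fun i => by split <;> ring

theorem lasso_va_ne_vb (u z : List Bool) (hz : z ≠ [])
    (lam : ℝ) (htr : Transcendental ℚ lam) (hlam : 1/2 < lam) (hlam1 : lam < 1) :
    vA lam (lassoWord u z) ≠ vB lam (lassoWord u z) := by
  intro heq
  let c : ℕ → ℚ := fun i => if lassoWord u z i then 1 else -1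
  have hper : ∀ i, u.length ≤ i → c (i + z.length) = c i := fun i hi => by
    simp only [c, lassoWord_add_length hi]
  have hc0 : c 0 ≠ 0 := by
    simp only [c]
    split <;> norm_num
  have hs : HasSum (fun i => algebraMap ℚ ℝ (c i) * lam ^ i) 0 := by
    have hdiff := hasSum_vA_sub_vB (by linarith) hlam1 (lassoWord u z)
    rw [heq, sub_self] at hdiff
    simpa [c, apply_ite] using hdiff
  exact htr (isAlgebraic_of_hasSum_zero_of_periodic (List.length_pos_iff.mpr hz) hper hc0 hs)
end
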